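/- There is an absolute constant c > 0 with the following property. Let A ∈ ℝ^{n×n} be symmetric with largest eigenvalue λ₁ = λ_max(A) > 0, let L > 0, and assume that every nonzero eigenvalue of A has magnitude at least L and that λ₁ ≥ L. Suppose S ∈ ℝ^{k×n} satisfies the subspace-embedding condition with parameter L for A. Then λ_max(SASᵀ) ≤ λ₁ + cL·log(λ₁/L + 2). -/

import Mathlib

open Matrix

/-- The eigenvalues of a real symmetric (Hermitian) matrix listed in decreasing order;
`eigDesc A i` is the `i`-th largest eigenvalue of `A` (counted with multiplicity).
(Junk value `0` if `A` is not Hermitian.) -/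
noncomputable def eigDesc {n : ℕ} (A : Matrix (Fin n) (Fin n) ℝ) : Fin n → ℝ := by
  classical
  exact if h : A.IsHermitian then
    fun i => h.eigenvalues (Tuple.sort (fun j => -h.eigenvalues j) i)
  else fun _ => 0

/-- The largest eigenvalue of a real symmetric matrix. -/
noncomputable def maxEig {n : ℕ} (A : Matrix (Fin n) (Fin n) ℝ) : ℝ :=
  ⨆ i : Fin n, eigDesc A i

/-- The span of the eigenvectors of `A` whose eigenvalues have magnitude at least `lam`. -/
noncomputable def eigSpanGE {n : ℕ} (A : Matrix (Fin n) (Fin n) ℝ) (lam : ℝ) :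
    Submodule ℝ (EuclideanSpace ℝ (Fin n)) :=
  ⨆ (μ : ℝ) (_ : lam ≤ |μ|), Module.End.eigenspace (Matrix.toEuclideanLin A) μ

/-- `S` is a `(1 ± α)`-distortion subspace embedding on the subspace `W`. -/
def IsSubspaceEmbeddingOn {n k : ℕ} (S : Matrix (Fin k) (Fin n) ℝ) (α : ℝ)
    (W : Submodule ℝ (EuclideanSpace ℝ (Fin n))) : Prop :=
  ∀ v ∈ W, (1 - α) * ‖v‖ ^ 2 ≤ ‖Matrix.toEuclideanLin S v‖ ^ 2 ∧
    ‖Matrix.toEuclideanLin S v‖ ^ 2 ≤ (1 + α) * ‖v‖ ^ 2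

/-- `S` satisfies the subspace-embedding condition with parameter `L` for `A`. -/
def SECondition {n k : ℕ} (S : Matrix (Fin k) (Fin n) ℝ) (A : Matrix (Fin n) (Fin n) ℝ)
    (L : ℝ) : Prop :=
  ∀ lam : ℝ, L ≤ lam → IsSubspaceEmbeddingOn S (min (L / lam) (1 / 10)) (eigSpanGE A lam)

section Aux

open RealInnerProductSpace

/- ## Abstract Abel-summation lemma -/

open Finset in
lemma abel_key {ι : Type*} [Fintype ι] [DecidableEq ι] (lam w : ι → ℝ) (L b : ℝ)
    (hL : 0 < L) (hw : ∀ i, 0 ≤ w i) :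
    ∀ (T : Finset ι), (∀ i ∈ T, lam i ≤ b) →
    (∀ t : ℝ, L ≤ t → ∑ i ∈ T.filter (fun i => t ≤ lam i), w i ≤ 1 + L / t) →
    ∀ a : ℝ, L ≤ a → (∀ i ∈ T, a ≤ lam i) → a ≤ b →
    ∑ i ∈ T, (lam i - a) * w i ≤ (b - a) + L * Real.log (b / a) := by
  intro T
  induction T using Finset.strongInductionOn with
  | _ T IH =>
    intro hub hthr a haL halb hab
    rcases T.eq_empty_or_nonempty with rfl | hne
    · simp only [Finset.sum_empty]
      have h1 : 0 ≤ b - a := by linarith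
      have h2 : 0 ≤ Real.log (b / a) := by
        apply Real.log_nonneg
        rw [le_div_iff₀ (by linarith)]
        linarith
      positivity
    · set m := T.inf' hne lam with hm
      obtain ⟨i₀, hi₀T, hi₀⟩ := Finset.exists_mem_eq_inf' hne lam
      have ham : a ≤ m := by rw [hm]; exact Finset.le_inf' hne lam halb
      have hmL : L ≤ m := le_trans haL ham
      have hmb : m ≤ b := by rw [hm, hi₀]; exact hub i₀ hi₀T
      have ha0 : (0:ℝ) < a := lt_of_lt_of_le hL haL
      have hm0 : (0:ℝ) < m := lt_of_lt_of_le hL hmL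
      have hb0 : (0:ℝ) < b := lt_of_lt_of_le ha0 hab
      have hm_le : ∀ i ∈ T, m ≤ lam i := fun i hi => Finset.inf'_le lam hi
      set T' := T.filter (fun i => m < lam i) with hT'
      have hss : T' ⊂ T := by
        refine Finset.ssubset_iff_of_subset (Finset.filter_subset _ _) |>.2 ⟨i₀, hi₀T, ?_⟩
        simp [hT', hi₀.symm.le, hm, hi₀]
      have hsplit : ∑ i ∈ T, (lam i - a) * w i
          = (m - a) * ∑ i ∈ T, w i + ∑ i ∈ T', (lam i - m) * w i := by
        rw [hT', Finset.sum_filter, Finset.mul_sum, ← Finset.sum_add_distrib]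
        apply Finset.sum_congr rfl
        intro i hi
        by_cases h : m < lam i
        · rw [if_pos h]; ring
        · have : lam i = m := le_antisymm (not_lt.1 h) (hm_le i hi)
          rw [if_neg h, this]; ring
      have hTfull : T.filter (fun i => m ≤ lam i) = T :=
        Finset.filter_true_of_mem hm_le
      have hsum_w : ∑ i ∈ T, w i ≤ 1 + L / m := by
        have := hthr m hmL
        rwa [hTfull] at this
      have h1 : (m - a) * ∑ i ∈ T, w i ≤ (m - a) * (1 + L / m) :=
        mul_le_mul_of_nonneg_left hsum_w (by linarith)
      have hthr' : ∀ t : ℝ, L ≤ t → ∑ i ∈ T'.filter (fun i => t ≤ lam i), w i ≤ 1 + L / t := by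
        intro t ht
        refine le_trans ?_ (hthr t ht)
        apply Finset.sum_le_sum_of_subset_of_nonneg
        · intro i hi
          simp only [hT', Finset.mem_filter] at hi ⊢
          exact ⟨hi.1.1, hi.2⟩
        · intro i _ _; exact hw i
      have h2 : ∑ i ∈ T', (lam i - m) * w i ≤ (b - m) + L * Real.log (b / m) := by
        apply IH T' hss (fun i hi => hub i (Finset.filter_subset _ _ hi)) hthr' m hmL
        · intro i hi
          exact (Finset.mem_filter.1 hi).2.le
        · exact hmb
      have hma : (m - a) * (L / m) ≤ L * Real.log (m / a) := by
        have hlog : Real.log (a / m) ≤ a / m - 1 :=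
          Real.log_le_sub_one_of_pos (div_pos ha0 hm0)
        have : Real.log (m / a) = - Real.log (a / m) := by
          rw [← Real.log_inv, inv_div]
        rw [this]
        have key : 1 - a / m ≤ - Real.log (a / m) := by linarith
        calc (m - a) * (L / m) = L * (1 - a / m) := by field_simp
          _ ≤ L * (- Real.log (a / m)) :=
            mul_le_mul_of_nonneg_left key hL.le
      have hlogsum : Real.log (m / a) + Real.log (b / m) = Real.log (b / a) := by
        rw [← Real.log_mul (ne_of_gt (div_pos hm0 ha0)) (ne_of_gt (div_pos hb0 hm0))]
        congr 1
        field_simp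
      calc ∑ i ∈ T, (lam i - a) * w i
          = (m - a) * ∑ i ∈ T, w i + ∑ i ∈ T', (lam i - m) * w i := hsplit
        _ ≤ (m - a) * (1 + L / m) + ((b - m) + L * Real.log (b / m)) := by linarith
        _ = (m - a) + (m - a) * (L / m) + (b - m) + L * Real.log (b / m) := by ring
        _ ≤ (m - a) + L * Real.log (m / a) + (b - m) + L * Real.log (b / m) := by linarith
        _ = (b - a) + L * (Real.log (m / a) + Real.log (b / m)) := by ring
        _ = (b - a) + L * Real.log (b / a) := by rw [hlogsum]

open Finset in
lemma abel_main {ι : Type*} [Fintype ι] [DecidableEq ι] (lam w : ι → ℝ) (L b : ℝ)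
    (hL : 0 < L) (hLb : L ≤ b) (hw : ∀ i, 0 ≤ w i)
    (hub : ∀ i, 0 < lam i → lam i ≤ b) (hlb : ∀ i, 0 < lam i → L ≤ lam i)
    (hthr : ∀ t : ℝ, L ≤ t →
      ∑ i ∈ Finset.univ.filter (fun i => t ≤ lam i), w i ≤ 1 + L / t) :
    ∑ i ∈ Finset.univ.filter (fun i => 0 < lam i), lam i * w i
      ≤ b + L + L * Real.log (b / L) := by
  set T := Finset.univ.filter (fun i => 0 < lam i) with hT
  have hmemT : ∀ i ∈ T, 0 < lam i := by
    intro i hi; exact (Finset.mem_filter.1 hi).2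
  have hthrT : ∀ t : ℝ, L ≤ t → ∑ i ∈ T.filter (fun i => t ≤ lam i), w i ≤ 1 + L / t := by
    intro t ht
    refine le_trans ?_ (hthr t ht)
    apply Finset.sum_le_sum_of_subset_of_nonneg
    · intro i hi
      simp only [hT, Finset.mem_filter, Finset.mem_univ, true_and] at hi ⊢
      exact hi.2
    · intro i _ _; exact hw i
  have hkey := abel_key lam w L b hL hw T
    (fun i hi => hub i (hmemT i hi)) hthrT L le_rfl
    (fun i hi => hlb i (hmemT i hi)) hLb
  have hTsum : ∑ i ∈ T, w i ≤ 2 := by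
    have hsub : T ⊆ Finset.univ.filter (fun i => L ≤ lam i) := by
      intro i hi
      simp only [Finset.mem_filter, Finset.mem_univ, true_and]
      exact hlb i (hmemT i hi)
    have h1 : ∑ i ∈ T, w i ≤ ∑ i ∈ Finset.univ.filter (fun i => L ≤ lam i), w i :=
      Finset.sum_le_sum_of_subset_of_nonneg hsub (fun i _ _ => hw i)
    have h2 := hthr L le_rfl
    rw [div_self hL.ne'] at h2
    linarith
  have hsplit : ∑ i ∈ T, lam i * w i
      = ∑ i ∈ T, (lam i - L) * w i + L * ∑ i ∈ T, w i := by
    rw [Finset.mul_sum, ← Finset.sum_add_distrib]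
    apply Finset.sum_congr rfl
    intro i _; ring
  rw [hsplit]
  have : L * ∑ i ∈ T, w i ≤ L * 2 := mul_le_mul_of_nonneg_left hTsum hL.le
  linarith

/- ## maxEig lemmas -/

lemma eigDesc_of_hermitian {n : ℕ} {A : Matrix (Fin n) (Fin n) ℝ} (hA : A.IsHermitian)
    (i : Fin n) :
    eigDesc A i = hA.eigenvalues (Tuple.sort (fun j => -hA.eigenvalues j) i) := by
  unfold eigDesc
  rw [dif_pos hA]

lemma eigenvalues_le_maxEig {n : ℕ} {A : Matrix (Fin n) (Fin n) ℝ} (hA : A.IsHermitian)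
    (i : Fin n) : hA.eigenvalues i ≤ maxEig A := by
  set σ := Tuple.sort (fun j => -hA.eigenvalues j)
  have : hA.eigenvalues i = eigDesc A (σ⁻¹ i) := by
    rw [eigDesc_of_hermitian hA, Equiv.Perm.inv_def, Equiv.apply_symm_apply]
  rw [this]
  exact le_ciSup (Set.Finite.bddAbove (Set.finite_range _)) _

lemma maxEig_le {n : ℕ} {A : Matrix (Fin n) (Fin n) ℝ} (hA : A.IsHermitian) {r : ℝ}
    (hr : 0 ≤ r) (h : ∀ i, hA.eigenvalues i ≤ r) : maxEig A ≤ r := by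
  rcases Nat.eq_zero_or_pos n with rfl | hn
  · unfold maxEig
    rw [Real.iSup_of_isEmpty]
    exact hr
  · have : Nonempty (Fin n) := ⟨⟨0, hn⟩⟩
    apply ciSup_le
    intro i
    rw [eigDesc_of_hermitian hA]
    exact h _

/- ## Linear-algebra plumbing -/

variable {n k : ℕ} {A : Matrix (Fin n) (Fin n) ℝ}

lemma toEuclideanLin_eigvec (hA : A.IsHermitian) (i : Fin n) :
    Matrix.toEuclideanLin A (hA.eigenvectorBasis i)
      = hA.eigenvalues i • hA.eigenvectorBasis i := by
  have h := hA.mulVec_eigenvectorBasis i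
  apply (WithLp.equiv 2 (Fin n → ℝ)).injective
  change A *ᵥ WithLp.ofLp (hA.eigenvectorBasis i) = WithLp.ofLp (hA.eigenvalues i • hA.eigenvectorBasis i)
  ext j
  have := congrFun h j
  simpa using this

lemma transpose_eq_conjT (S : Matrix (Fin k) (Fin n) ℝ) : Sᵀ = Sᴴ :=
  (Matrix.conjTranspose_eq_transpose_of_trivial S).symm

lemma inner_S_adj (S : Matrix (Fin k) (Fin n) ℝ) (x : EuclideanSpace ℝ (Fin k))
    (v : EuclideanSpace ℝ (Fin n)) :
    ⟪Matrix.toEuclideanLin Sᵀ x, v⟫ = ⟪x, Matrix.toEuclideanLin S v⟫ := by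
  rw [transpose_eq_conjT, Matrix.toEuclideanLin_conjTranspose_eq_adjoint]
  exact LinearMap.adjoint_inner_left (Matrix.toEuclideanLin S) v x

lemma toEuclideanLin_triple (S : Matrix (Fin k) (Fin n) ℝ) (x : EuclideanSpace ℝ (Fin k)) :
    Matrix.toEuclideanLin (S * A * Sᵀ) x
      = Matrix.toEuclideanLin S (Matrix.toEuclideanLin A (Matrix.toEuclideanLin Sᵀ x)) := by
  simp only [Matrix.toEuclideanLin_apply, Equiv.apply_symm_apply, Matrix.mulVec_mulVec,
    Matrix.mul_assoc]

lemma eigvec_mem_eigSpanGE (hA : A.IsHermitian) {t : ℝ} (i : Fin n)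
    (h : t ≤ |hA.eigenvalues i|) :
    (hA.eigenvectorBasis i : EuclideanSpace ℝ (Fin n)) ∈ eigSpanGE A t := by
  apply Submodule.mem_iSup_of_mem (hA.eigenvalues i)
  apply Submodule.mem_iSup_of_mem h
  rw [Module.End.mem_eigenspace_iff]
  exact toEuclideanLin_eigvec hA i

end Aux

section Main

open RealInnerProductSpace Finset

set_option maxHeartbeats 2000000 in
/-- upper bound on the top eigenvalue of `SASᵀ`. -/
theorem stmt8 :
    ∃ c : ℝ, 0 < c ∧
      ∀ (n k : ℕ) (A : Matrix (Fin n) (Fin n) ℝ) (hA : A.IsHermitian)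
        (S : Matrix (Fin k) (Fin n) ℝ) (L : ℝ), 0 < L →
        0 < maxEig A → L ≤ maxEig A →
        (∀ i : Fin n, hA.eigenvalues i ≠ 0 → L ≤ |hA.eigenvalues i|) →
        SECondition S A L →
        maxEig (S * A * Sᵀ) ≤ maxEig A + c * L * Real.log (maxEig A / L + 2) := by
  classical
  refine ⟨3, by norm_num, ?_⟩
  intro n k A hA S L hL hmax hLmax hgap hSE
  set Λ := maxEig A with hΛ
  set g := Real.log (Λ / L + 2) with hg
  -- basic log facts
  have hΛL1 : (1:ℝ) ≤ Λ / L := (one_le_div hL).2 hLmax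
  have hlog1 : (1:ℝ) ≤ g := by
    have h3 : (3:ℝ) ≤ Λ / L + 2 := by linarith
    have he : Real.exp 1 ≤ 3 := by
      have := Real.exp_one_lt_d9
      linarith
    calc (1:ℝ) = Real.log (Real.exp 1) := (Real.log_exp 1).symm
      _ ≤ Real.log 3 := Real.log_le_log (Real.exp_pos 1) he
      _ ≤ g := Real.log_le_log (by norm_num) h3
  have hmono : Real.log (Λ / L) ≤ g :=
    Real.log_le_log (by positivity) (by linarith)
  have hRHS : Λ + L + L * Real.log (Λ / L) ≤ Λ + 3 * L * g := by
    nlinarith [hL.le, mul_le_mul_of_nonneg_left hmono hL.le,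
      mul_le_mul_of_nonneg_left hlog1 hL.le]
  have hRHSpos : 0 ≤ Λ + 3 * L * g := by nlinarith
  -- the sketched matrix is Hermitian
  have hB : (S * A * Sᵀ).IsHermitian := by
    rw [transpose_eq_conjT]
    exact Matrix.isHermitian_mul_mul_conjTranspose S hA
  apply maxEig_le hB hRHSpos
  intro j
  -- notation
  set x : EuclideanSpace ℝ (Fin k) := hB.eigenvectorBasis j with hx
  set y : EuclideanSpace ℝ (Fin n) := Matrix.toEuclideanLin Sᵀ x with hy
  set lam : Fin n → ℝ := hA.eigenvalues with hlam
  set v : Fin n → EuclideanSpace ℝ (Fin n) := fun i => hA.eigenvectorBasis i with hv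
  have hortho : Orthonormal ℝ v := hA.eigenvectorBasis.orthonormal
  set c : Fin n → ℝ := fun i => ⟪v i, y⟫ with hc
  set w : Fin n → ℝ := fun i => (c i) ^ 2 with hw
  have hwnn : ∀ i, 0 ≤ w i := fun i => sq_nonneg _
  have hx1 : ‖x‖ = 1 := hB.eigenvectorBasis.orthonormal.1 j
  -- Step A : eigenvalue as quadratic form
  have eA : hB.eigenvalues j = ⟪y, Matrix.toEuclideanLin A y⟫ := by
    have e1 : ⟪x, Matrix.toEuclideanLin (S * A * Sᵀ) x⟫ = hB.eigenvalues j := by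
      rw [toEuclideanLin_eigvec hB j, real_inner_smul_right, real_inner_self_eq_norm_sq,
        hx1]
      ring
    have e2 : ⟪x, Matrix.toEuclideanLin (S * A * Sᵀ) x⟫
        = ⟪y, Matrix.toEuclideanLin A y⟫ := by
      rw [toEuclideanLin_triple S x, ← inner_S_adj S x, hy]
    rw [← e1, e2]
  -- Step B : expand in the eigenbasis of A
  have hsymm := Matrix.isHermitian_iff_isSymmetric.1 hA
  have eB : ⟪y, Matrix.toEuclideanLin A y⟫ = ∑ i, lam i * w i := by
    rw [← hA.eigenvectorBasis.sum_inner_mul_inner y (Matrix.toEuclideanLin A y)]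
    apply Finset.sum_congr rfl
    intro i _
    have h1 : ⟪y, hA.eigenvectorBasis i⟫ = c i := real_inner_comm _ _
    have h2 : ⟪(hA.eigenvectorBasis i : EuclideanSpace ℝ (Fin n)),
        Matrix.toEuclideanLin A y⟫ = lam i * c i := by
      rw [← hsymm (hA.eigenvectorBasis i) y, toEuclideanLin_eigvec hA i,
        real_inner_smul_left]
    rw [h1, h2, hw]
    ring
  -- Step C : threshold bound
  have hthr : ∀ t : ℝ, L ≤ t →
      ∑ i ∈ Finset.univ.filter (fun i => t ≤ lam i), w i ≤ 1 + L / t := by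
    intro t ht
    have ht0 : (0:ℝ) < t := lt_of_lt_of_le hL ht
    set F := Finset.univ.filter (fun i => t ≤ lam i) with hF
    set u : EuclideanSpace ℝ (Fin n) := ∑ i ∈ F, c i • v i with hu
    have hmemu : u ∈ eigSpanGE A t := by
      apply Submodule.sum_mem
      intro i hi
      apply Submodule.smul_mem
      apply eigvec_mem_eigSpanGE hA
      have hti : t ≤ lam i := (Finset.mem_filter.1 hi).2
      exact le_trans hti (le_abs_self _)
    have huy : ⟪u, y⟫ = ∑ i ∈ F, w i := by
      rw [hu, sum_inner]
      apply Finset.sum_congr rfl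
      intro i _
      rw [real_inner_smul_left, hw]
      ring
    have hnu : ‖u‖ ^ 2 = ∑ i ∈ F, w i := by
      rw [← real_inner_self_eq_norm_sq, hu, hortho.inner_sum c c F]
      apply Finset.sum_congr rfl
      intro i _
      simp [hw, sq]
    have hSE' := (hSE t ht u hmemu).2
    have hαle : min (L / t) (1 / 10) ≤ L / t := min_le_left _ _
    have hSu : ‖Matrix.toEuclideanLin S u‖ ^ 2 ≤ (1 + L / t) * ‖u‖ ^ 2 := by
      refine le_trans hSE' ?_
      apply mul_le_mul_of_nonneg_right _ (sq_nonneg _)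
      linarith
    have hinner : ⟪u, y⟫ ≤ ‖Matrix.toEuclideanLin S u‖ := by
      have : ⟪u, y⟫ = ⟪x, Matrix.toEuclideanLin S u⟫ := by
        rw [hy, real_inner_comm, inner_S_adj S x u]
      rw [this]
      calc ⟪x, Matrix.toEuclideanLin S u⟫ ≤ ‖x‖ * ‖Matrix.toEuclideanLin S u‖ :=
            real_inner_le_norm _ _
        _ = ‖Matrix.toEuclideanLin S u‖ := by rw [hx1, one_mul]
    have hsnn : 0 ≤ ∑ i ∈ F, w i := Finset.sum_nonneg fun i _ => hwnn i
    have hN0 : (0:ℝ) ≤ ‖Matrix.toEuclideanLin S u‖ := norm_nonneg _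
    have h1 : (∑ i ∈ F, w i) ≤ ‖Matrix.toEuclideanLin S u‖ := by
      rw [← huy]; exact hinner
    have hkey : (∑ i ∈ F, w i) ^ 2 ≤ (1 + L / t) * (∑ i ∈ F, w i) := by
      calc (∑ i ∈ F, w i) ^ 2 ≤ ‖Matrix.toEuclideanLin S u‖ ^ 2 := by nlinarith
        _ ≤ (1 + L / t) * ‖u‖ ^ 2 := hSu
        _ = (1 + L / t) * (∑ i ∈ F, w i) := by rw [hnu]
    rcases eq_or_lt_of_le hsnn with heq | hpos
    · rw [← heq]
      positivity
    · nlinarith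
  -- Step D : drop nonpositive eigenvalue terms
  have eD : ∑ i, lam i * w i
      ≤ ∑ i ∈ Finset.univ.filter (fun i => 0 < lam i), lam i * w i := by
    rw [← Finset.sum_filter_add_sum_filter_not Finset.univ (fun i => 0 < lam i)
      (fun i => lam i * w i)]
    have : ∑ i ∈ Finset.univ.filter (fun i => ¬ 0 < lam i), lam i * w i ≤ 0 := by
      apply Finset.sum_nonpos
      intro i hi
      have : lam i ≤ 0 := not_lt.1 (Finset.mem_filter.1 hi).2
      exact mul_nonpos_of_nonpos_of_nonneg this (hwnn i)
    linarith
  -- Step E : Abel summation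
  have eE : ∑ i ∈ Finset.univ.filter (fun i => 0 < lam i), lam i * w i
      ≤ Λ + L + L * Real.log (Λ / L) := by
    apply abel_main lam w L Λ hL hLmax hwnn
    · intro i _
      exact eigenvalues_le_maxEig hA i
    · intro i hpos
      have := hgap i (ne_of_gt hpos)
      rwa [abs_of_pos hpos] at this
    · exact hthr
  calc hB.eigenvalues j = ⟪y, Matrix.toEuclideanLin A y⟫ := eA
    _ = ∑ i, lam i * w i := eB
    _ ≤ ∑ i ∈ Finset.univ.filter (fun i => 0 < lam i), lam i * w i := eD
    _ ≤ Λ + L + L * Real.log (Λ / L) := eE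
    _ ≤ Λ + 3 * L * g := hRHS

end Main
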